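/- Let q = p^m be a prime power with p ≥ 7 prime. Define M_a := 2a if q ≡ 2 (mod 3) and a is odd, and M_a := a otherwise; M_a is the maximal size of an orbit in O_q(a). There exists a constant C > 0, depending only on q, such that for every integer a ≥ 1 and every finite field F with q^a elements, the number of pairs (j, x) ∈ (ZMod 3)ˣ × Fˣ whose orbit under (j,x) ↦ (q·j, x^q) has fewer than M_a elements is at most C·q^{a/2}. Equivalently, the sum of the sizes |o| over all non-maximal orbits o ∈ O_q(a) is at most C·q^{a/2}. -/

import Mathlib

/-!
Let `u = q mod 3` in `(ZMod 3)ˣ`. The orbit of `(j, x)` is the forward orbit of `(j, x)` under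
`(u * ·) × (· ^ q)`, so its size is `lcm (orderOf u) s`, where `s` is the least period of `x` under
the Frobenius `x ↦ x ^ q`; `s` divides `a` because `x ^ q ^ a = x`. If `s = a`, this lcm is at least
`M_a`, since `orderOf u = 2` when `q ≡ 2 (mod 3)`. So a small orbit forces `s` to be a proper
divisor of `a`, i.e. `x ^ q ^ t = x` for some `1 ≤ t ≤ a / 2`. In the cyclic group `Fˣ` this
equation has fewer than `q ^ t` solutions, and the geometric sum over `t` gives at most
`2 q ^ (a / 2 + 1)` pairs, so `C = 2 q` works.
-/

/-- The orbit of `(j, x)` under the map `(j, x) ↦ (q·j, x^q)` on `(ZMod 3)ˣ × Fˣ`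
(where `q·j` is multiplication by `q mod 3`). -/
def twistedOrbit (q : ℕ) {F : Type*} [Field F] (w : (ZMod 3)ˣ × Fˣ) :
    Set ((ZMod 3)ˣ × Fˣ) :=
  {z : (ZMod 3)ˣ × Fˣ | ∃ n : ℕ,
    (z.1 : ZMod 3) = (q : ZMod 3) ^ n * (w.1 : ZMod 3) ∧ z.2 = w.2 ^ q ^ n}

open Function Finset

theorem Nat.le_div_two_of_dvd_of_ne {d n : ℕ} (hn : 0 < n) (hd : d ∣ n) (hne : d ≠ n) :
    d ≤ n / 2 := by
  obtain ⟨k, rfl⟩ := hd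
  have hk : 2 ≤ k := by
    rcases k with _ | _ | k
    · simp at hn
    · simp at hne
    · omega
  rw [Nat.le_div_iff_mul_le two_pos]
  exact Nat.mul_le_mul_left d hk

namespace Function

theorem minimalPeriod_le_ncard_range_iterate {α : Type*} [Finite α] (f : α → α) (x : α) :
    minimalPeriod f x ≤ (Set.range fun n => f^[n] x).ncard :=
  calc minimalPeriod f x = ((fun n => f^[n] x) '' Set.Iio (minimalPeriod f x)).ncard := by
        rw [iterate_injOn_Iio_minimalPeriod.ncard_image, Set.ncard_Iio_nat]
    _ ≤ _ := Set.ncard_le_ncard (Set.image_subset_range _ _) (Set.toFinite _)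

theorem minimalPeriod_mul_left {G : Type*} [Group G] (u j : G) :
    minimalPeriod (u * ·) j = orderOf u := by
  rw [orderOf]
  exact minimalPeriod_eq_minimalPeriod_iff.2 fun n => by
    simp [IsPeriodicPt, IsFixedPt, mul_left_iterate]

end Function

theorem IsCyclic.card_pow_eq_self_lt {G : Type*} [Group G] [Fintype G] [DecidableEq G]
    [IsCyclic G] {n : ℕ} (hn : 1 < n) : #{x : G | x ^ n = x} < n := by
  obtain ⟨k, rfl⟩ : ∃ k, n = k + 1 := ⟨n - 1, by omega⟩
  simp_rw [pow_succ, mul_eq_right]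
  exact (IsCyclic.card_pow_eq_one_le (by omega)).trans_lt k.lt_succ_self

theorem ZMod.orderOf_unitOfCoprime_eq_two {q : ℕ} (hq : q.Coprime 3) (h2 : q % 3 = 2) :
    orderOf (ZMod.unitOfCoprime q hq) = 2 := by
  have hq2 : (q : ZMod 3) = 2 := by rw [← ZMod.natCast_mod, h2]; rfl
  apply orderOf_eq_prime
  · ext
    rw [Units.val_pow_eq_pow_val, ZMod.coe_unitOfCoprime, hq2]
    rfl
  · rw [Ne, Units.ext_iff, ZMod.coe_unitOfCoprime, hq2]
    decide

def maxOrbitSize (q a : ℕ) : ℕ := if q % 3 = 2 ∧ Odd a then 2 * a else a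

theorem maxOrbitSize_le_lcm_orderOf {q a : ℕ} (hq : q.Coprime 3) (ha : 0 < a) :
    maxOrbitSize q a ≤ (orderOf (ZMod.unitOfCoprime q hq)).lcm a := by
  unfold maxOrbitSize
  split_ifs with h
  · rw [ZMod.orderOf_unitOfCoprime_eq_two hq h.1,
      Nat.Coprime.lcm_eq_mul (Nat.coprime_two_left.2 h.2)]
  · exact Nat.le_of_dvd (Nat.lcm_pos (orderOf_pos _) ha) (Nat.dvd_lcm_right _ _)

section TwistedOrbit

variable {F : Type*} [Field F] {q a : ℕ}

theorem twistedOrbit_eq_range_iterate (hq : q.Coprime 3) (w : (ZMod 3)ˣ × Fˣ) :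
    twistedOrbit q w =
      Set.range fun n => (Prod.map (ZMod.unitOfCoprime q hq * ·) (· ^ q))^[n] w := by
  ext z
  simp [twistedOrbit, mul_left_iterate, pow_iterate, Prod.ext_iff, Units.ext_iff, eq_comm]

theorem lcm_orderOf_le_ncard_twistedOrbit [Finite F] (hq : q.Coprime 3) (z : (ZMod 3)ˣ × Fˣ) :
    (orderOf (ZMod.unitOfCoprime q hq)).lcm (minimalPeriod (· ^ q) z.2) ≤
      (twistedOrbit q z).ncard := by
  rw [twistedOrbit_eq_range_iterate hq, ← minimalPeriod_mul_left _ z.1, ← minimalPeriod_prodMap]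
  exact minimalPeriod_le_ncard_range_iterate _ _

variable [Fintype F]

theorem isPeriodicPt_pow_of_card_eq (hF : Fintype.card F = q ^ a) (x : Fˣ) :
    IsPeriodicPt (· ^ q) a x := by
  simp only [IsPeriodicPt, IsFixedPt, pow_iterate]
  ext
  push_cast
  rw [← hF, FiniteField.pow_card]

theorem exists_pow_pow_eq_self_of_ncard_twistedOrbit_lt (hq : q.Coprime 3)
    (hF : Fintype.card F = q ^ a) (ha : 0 < a) {z : (ZMod 3)ˣ × Fˣ}
    (hz : (twistedOrbit q z).ncard < maxOrbitSize q a) :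
    ∃ t ∈ Icc 1 (a / 2), z.2 ^ q ^ t = z.2 := by
  have hper := isPeriodicPt_pow_of_card_eq hF z.2
  have hs_ne : minimalPeriod (· ^ q) z.2 ≠ a := fun hs => hz.not_ge <|
    (maxOrbitSize_le_lcm_orderOf hq ha).trans (hs ▸ lcm_orderOf_le_ncard_twistedOrbit hq z)
  refine ⟨minimalPeriod (· ^ q) z.2, mem_Icc.2 ⟨hper.minimalPeriod_pos ha, ?_⟩, ?_⟩
  · exact Nat.le_div_two_of_dvd_of_ne ha hper.minimalPeriod_dvd hs_ne
  · have := isPeriodicPt_minimalPeriod (· ^ q) z.2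
    rwa [IsPeriodicPt, IsFixedPt, pow_iterate] at this

theorem ncard_setOf_ncard_twistedOrbit_lt_le (hq : q.Coprime 3) (hF : Fintype.card F = q ^ a) :
    {z : (ZMod 3)ˣ × Fˣ | (twistedOrbit q z).ncard < maxOrbitSize q a}.ncard ≤
      2 * q ^ (a / 2 + 1) := by
  classical
  have hqa : 1 < q ^ a := hF ▸ Fintype.one_lt_card
  have ha : 0 < a := Nat.pos_of_ne_zero fun h => by simp [h] at hqa
  have hq2 : 2 ≤ q := (one_lt_pow_iff_of_nonneg q.zero_le ha.ne').1 hqa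
  set S := (Icc 1 (a / 2)).biUnion fun t => ({x : Fˣ | x ^ q ^ t = x} : Finset Fˣ)
  have hsub : {z : (ZMod 3)ˣ × Fˣ | (twistedOrbit q z).ncard < maxOrbitSize q a} ⊆
      ↑((univ : Finset (ZMod 3)ˣ) ×ˢ S) := fun z hz => by
    obtain ⟨t, ht, hzt⟩ := exists_pow_pow_eq_self_of_ncard_twistedOrbit_lt hq hF ha hz
    simpa [S] using ⟨t, mem_Icc.1 ht, hzt⟩
  calc _ ≤ #((univ : Finset (ZMod 3)ˣ) ×ˢ S) :=
        (Set.ncard_le_ncard hsub).trans_eq (Set.ncard_coe_finset _)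
    _ = 2 * #S := by rw [card_product]; rfl
    _ ≤ 2 * ∑ t ∈ Icc 1 (a / 2), q ^ t := by
      gcongr
      refine card_biUnion_le.trans (sum_le_sum fun t ht => ?_)
      exact (IsCyclic.card_pow_eq_self_lt (Nat.one_lt_pow (by simp at ht; omega) hq2)).le
    _ ≤ 2 * q ^ (a / 2 + 1) := by
      gcongr
      exact (Nat.geomSum_lt hq2 fun t ht => by simp at ht; omega).le

end TwistedOrbit

theorem stmt_16_general (p m q : ℕ) (hp : p.Prime) (hp7 : 7 ≤ p) (hq : q = p ^ m) :
    ∃ C : ℝ, 0 < C ∧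
      ∀ (a : ℕ), 1 ≤ a →
      ∀ (F : Type) [Field F] [Fintype F], Fintype.card F = q ^ a →
        (({z : (ZMod 3)ˣ × Fˣ |
            (twistedOrbit q z).ncard < (if q % 3 = 2 ∧ Odd a then 2 * a else a)}).ncard : ℝ) ≤
          C * (q : ℝ) ^ ((a : ℝ) / 2) := by
  have hq3 : q.Coprime 3 := hq ▸ ((Nat.coprime_primes hp Nat.prime_three).2 (by omega)).pow_left m
  have hq1 : (1 : ℝ) ≤ q := by exact_mod_cast hq ▸ Nat.one_le_pow _ _ hp.pos
  refine ⟨2 * q, by positivity, fun a _ F _ _ hF => ?_⟩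
  calc _ ≤ ((2 * q ^ (a / 2 + 1) : ℕ) : ℝ) :=
        by exact_mod_cast ncard_setOf_ncard_twistedOrbit_lt_le hq3 hF
    _ = 2 * q * (q : ℝ) ^ ((a / 2 : ℕ) : ℝ) := by push_cast [Real.rpow_natCast]; ring
    _ ≤ 2 * q * (q : ℝ) ^ ((a : ℝ) / 2) := by
        gcongr
        exact Nat.cast_div_le

/-- With `M_a = 2a` when `q ≡ 2 (mod 3)` and `a` is odd, and `M_a = a` otherwise
(the maximal orbit size in `O_q(a)`), the number of pairs `(j, x) ∈ (ZMod 3)ˣ × Fˣ`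
whose orbit under `(j, x) ↦ (q·j, x^q)` has fewer than `M_a` elements is at most
`C·q^{a/2}` for a constant `C` depending only on `q`. -/
theorem stmt_16 (p m q : ℕ) (hp : p.Prime) (hp7 : 7 ≤ p) (hm : 1 ≤ m) (hq : q = p ^ m) :
    ∃ C : ℝ, 0 < C ∧
      ∀ (a : ℕ), 1 ≤ a →
      ∀ (F : Type) [Field F] [Fintype F], Fintype.card F = q ^ a →
        (({z : (ZMod 3)ˣ × Fˣ |
            (twistedOrbit q z).ncard < (if q % 3 = 2 ∧ Odd a then 2 * a else a)}).ncard : ℝ) ≤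
          C * (q : ℝ) ^ ((a : ℝ) / 2) :=
  stmt_16_general p m q hp hp7 hq
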